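/- arXiv:2109.00394 — 2 statements merged into one kernel-verified Lean document; each statement's English description precedes it below -/
import Mathlib

section
/- For every x ∈ ℝⁿ one has lim_{t→∞} E_{Q,M}(t·x) = Σ_{S⊆[r]} E_{Q,M_S}(0) · δ_{B(M_S,x)=0} · ∏_{j∈[r]∖S} sgn(B(m_j,x)), where δ_{B(M_S,x)=0} equals 1 if B(m_k,x)=0 for all k∈S and 0 otherwise. In particular, if B(m_j,x) ≠ 0 for all j ∈ [r], then lim_{t→∞} E_{Q,M}(t·x) = ∏_{j=1}^r sgn(B(m_j,x)). -/
open MeasureTheory Filter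
open scoped Real

attribute [local instance] Classical.propDecidable

noncomputable section

/-- The bilinear form `B(x,y) = xᵀAy` associated with the matrix `A`. -/
def bilin {n : ℕ} (A : Matrix (Fin n) (Fin n) ℝ) (x y : Fin n → ℝ) : ℝ :=
  ∑ i, ∑ j, x i * A i j * y j

/-- The quadratic form `Q(x) = B(x,x)/2`. -/
def quad {n : ℕ} (A : Matrix (Fin n) (Fin n) ℝ) (x : Fin n → ℝ) : ℝ := bilin A x x / 2

/-- The real matrix associated to an integral matrix. -/
def Rmat {n : ℕ} (A : Matrix (Fin n) (Fin n) ℤ) : Matrix (Fin n) (Fin n) ℝ :=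
  A.map ((↑) : ℤ → ℝ)

/-- The generalized error function `E_{Q, M_S}(x)`, with sign factors ranging over the
columns of `M` indexed by `S`; for `S = univ` this is `E_{Q,M}(x)`, and `E_{Q,∅} = 1`
corresponds to `S = ∅` (up to the Gaussian integral). -/
def genErr {n r : ℕ} (A : Matrix (Fin n) (Fin n) ℝ) (M : Fin r → Fin n → ℝ)
    (S : Finset (Fin r)) (x : Fin n → ℝ) : ℝ :=
  Real.sqrt A.det *
    ∫ y : Fin n → ℝ,
      (∏ j ∈ S, Real.sign (bilin A (M j) y)) * Real.exp (-(2 * Real.pi * quad A (y - x)))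

/-!
Substituting `y ↦ y + t x`, `E_{Q,M}(t x)` is the Gaussian average of
`∏ⱼ sgn (B(mⱼ, y) + t B(mⱼ, x))`. As `t → ∞` each factor with `B(mⱼ, x) ≠ 0` eventually
equals `sgn B(mⱼ, x)` and the other factors do not depend on `t`, so dominated convergence gives
the limit `E_{Q,M_{S₀}}(0) ∏_{j ∉ S₀} sgn B(mⱼ, x)` with `S₀ = {j | B(mⱼ, x) = 0}`. In the sum
over `S` only `S = S₀` survives: the `δ` kills `S ⊈ S₀`, and for `S ⊊ S₀` the product contains
`sgn 0 = 0`. The normalisation `E_{Q,∅} = 1` is the Gaussian integral, computed by the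
substitution `z = A^{1/2} y`.
-/

open scoped Matrix Topology

namespace Real

lemma measurable_sign : Measurable Real.sign :=
  Measurable.ite (measurableSet_lt measurable_id measurable_const) measurable_const
    (Measurable.ite (measurableSet_lt measurable_const measurable_id) measurable_const
      measurable_const)

lemma abs_sign_le_one (r : ℝ) : |Real.sign r| ≤ 1 := by
  rcases Real.sign_apply_eq r with h | h | h <;> simp [h]

lemma eventually_sign_add_mul_atTop (a b : ℝ) :
    ∀ᶠ t in atTop, Real.sign (a + t * b) = if b = 0 then Real.sign a else Real.sign b := by
  rcases lt_trichotomy b 0 with hb | rfl | hb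
  · have h := tendsto_atBot_add_const_left _ a (tendsto_id.atTop_mul_const_of_neg hb)
    filter_upwards [h.eventually (eventually_lt_atBot 0)] with t ht
    rw [if_neg hb.ne, Real.sign_of_neg hb]
    exact Real.sign_of_neg ht
  · simp
  · have h := tendsto_atTop_add_const_left _ a (tendsto_id.atTop_mul_const hb)
    filter_upwards [h.eventually (eventually_gt_atTop 0)] with t ht
    rw [if_neg hb.ne', Real.sign_of_pos hb]
    exact Real.sign_of_pos ht

end Real

lemma Finset.sum_powerset_mul_ite_forall_eq_zero_mul_prod_sign {ι : Type*} [Fintype ι]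
    [DecidableEq ι] (F : Finset ι → ℝ) (b : ι → ℝ)
    [∀ S : Finset ι, Decidable (∀ k ∈ S, b k = 0)] :
    ∑ S ∈ (Finset.univ : Finset ι).powerset,
        F S * (if ∀ k ∈ S, b k = 0 then 1 else 0) * ∏ j ∈ Finset.univ \ S, Real.sign (b j) =
      F (Finset.univ.filter (b · = 0)) *
        ∏ j ∈ Finset.univ \ Finset.univ.filter (b · = 0), Real.sign (b j) := by
  rw [Finset.sum_eq_single_of_mem _ (Finset.mem_powerset.2 (Finset.subset_univ _))]
  · rw [if_pos fun k hk => (Finset.mem_filter.1 hk).2, mul_one]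
  intro S _ hS
  split_ifs with hzero
  · obtain ⟨j, hj, hjS⟩ : ∃ j, b j = 0 ∧ j ∉ S := by
      by_contra! h
      exact hS (Finset.Subset.antisymm (fun k hk => by simpa using hzero k hk)
        fun k hk => h k (by simpa using hk))
    rw [Finset.prod_eq_zero (i := j) (by simpa using hjS) (by rw [hj, Real.sign_zero]),
      mul_zero]
  · simp

section ChangeOfVariables

variable {ι : Type*} [Fintype ι] [DecidableEq ι] {R : Matrix ι ι ℝ}

lemma Matrix.measurableEmbedding_mulVec (hR : R.det ≠ 0) :
    MeasurableEmbedding (R *ᵥ ·) := by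
  have hdet : LinearMap.det (Matrix.toLin' R) ≠ 0 := by rwa [LinearMap.det_toLin']
  exact (LinearMap.equivOfDetNeZero _ hdet).toContinuousLinearEquiv.toHomeomorph.measurableEmbedding

lemma Matrix.map_mulVec_volume (hR : R.det ≠ 0) :
    Measure.map (R *ᵥ ·) volume = ENNReal.ofReal |R.det⁻¹| • volume :=
  Real.map_matrix_volume_pi_eq_smul_volume_pi hR

lemma Matrix.integral_comp_mulVec (hR : R.det ≠ 0) (f : (ι → ℝ) → ℝ) :
    ∫ y, f (R *ᵥ y) = |R.det|⁻¹ * ∫ z, f z := by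
  rw [← (Matrix.measurableEmbedding_mulVec hR).integral_map, Matrix.map_mulVec_volume hR,
    integral_smul_measure, ENNReal.toReal_ofReal (abs_nonneg _), abs_inv, smul_eq_mul]

lemma Matrix.integrable_comp_mulVec_iff (hR : R.det ≠ 0) {f : (ι → ℝ) → ℝ} :
    Integrable (fun y => f (R *ᵥ y)) ↔ Integrable f := by
  rw [← Function.comp_def, ← (Matrix.measurableEmbedding_mulVec hR).integrable_map_iff,
    Matrix.map_mulVec_volume hR]
  exact integrable_smul_measure (by simpa using hR) ENNReal.ofReal_ne_top

end ChangeOfVariables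

section BilinearForm

variable {n : ℕ} (A : Matrix (Fin n) (Fin n) ℝ)

lemma bilin_eq_dotProduct_mulVec (x y : Fin n → ℝ) :
    bilin A x y = x ⬝ᵥ (A *ᵥ y) := by
  simp only [bilin, dotProduct, Matrix.mulVec, Finset.mul_sum, mul_assoc]

lemma bilin_add_smul_right (m y x : Fin n → ℝ) (t : ℝ) :
    bilin A m (y + t • x) = bilin A m y + t * bilin A m x := by
  simp only [bilin_eq_dotProduct_mulVec, Matrix.mulVec_add, Matrix.mulVec_smul, dotProduct_add,
    dotProduct_smul, smul_eq_mul]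

lemma continuous_bilin (m : Fin n → ℝ) :
    Continuous (bilin A m) := by
  unfold bilin
  fun_prop

end BilinearForm

section StandardGaussian

variable {ι : Type*} [Fintype ι]

lemma exp_neg_pi_dotProduct_self_eq_prod (z : ι → ℝ) :
    Real.exp (-π * (z ⬝ᵥ z)) = ∏ i, Real.exp (-π * z i ^ 2) := by
  simp only [dotProduct, Finset.mul_sum, Real.exp_sum, sq]

lemma integrable_exp_neg_pi_dotProduct_self :
    Integrable fun z : ι → ℝ => Real.exp (-π * (z ⬝ᵥ z)) := by
  simp only [exp_neg_pi_dotProduct_self_eq_prod]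
  exact Integrable.fintype_prod (f := fun _ x => Real.exp (-π * x ^ 2))
    fun _ => integrable_exp_neg_mul_sq Real.pi_pos

lemma integral_exp_neg_pi_dotProduct_self :
    ∫ z : ι → ℝ, Real.exp (-π * (z ⬝ᵥ z)) = 1 := by
  simp only [exp_neg_pi_dotProduct_self_eq_prod]
  rw [volume_pi, integral_fintype_prod_eq_pow (fun x : ℝ => Real.exp (-π * x ^ 2)),
    integral_gaussian, div_self Real.pi_ne_zero, Real.sqrt_one, one_pow]

end StandardGaussian

section Gaussian

open scoped MatrixOrder

variable {n : ℕ} {A : Matrix (Fin n) (Fin n) ℝ}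

lemma two_mul_quad_eq_sqrt_mulVec_dotProduct (hA : A.PosSemidef) (y : Fin n → ℝ) :
    2 * quad A y = (CFC.sqrt A *ᵥ y) ⬝ᵥ (CFC.sqrt A *ᵥ y) := by
  have hsymm : (CFC.sqrt A)ᵀ = CFC.sqrt A := by
    simpa using (Matrix.nonneg_iff_posSemidef.mp (CFC.sqrt_nonneg A)).isHermitian.eq
  rw [Matrix.dotProduct_mulVec, ← Matrix.mulVec_transpose, hsymm, Matrix.mulVec_mulVec,
    CFC.sqrt_mul_sqrt_self A hA.nonneg, quad, bilin_eq_dotProduct_mulVec, dotProduct_comm]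
  ring

lemma exp_neg_two_pi_quad_eq (hA : A.PosSemidef) (y : Fin n → ℝ) :
    Real.exp (-(2 * π * quad A y)) =
      Real.exp (-π * ((CFC.sqrt A *ᵥ y) ⬝ᵥ (CFC.sqrt A *ᵥ y))) := by
  rw [← two_mul_quad_eq_sqrt_mulVec_dotProduct hA]
  ring_nf

lemma Matrix.PosDef.det_sqrt_eq (hA : A.PosDef) : (CFC.sqrt A).det = √A.det := by
  rw [hA.posSemidef.det_sqrt, RCLike.sqrt_real]

lemma integrable_exp_neg_two_pi_quad (hA : A.PosDef) :
    Integrable fun y => Real.exp (-(2 * π * quad A y)) := by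
  simp only [exp_neg_two_pi_quad_eq hA.posSemidef]
  refine (Matrix.integrable_comp_mulVec_iff (f := fun z => Real.exp (-π * (z ⬝ᵥ z))) ?_).2
    integrable_exp_neg_pi_dotProduct_self
  rw [hA.det_sqrt_eq]
  exact (Real.sqrt_pos.2 hA.det_pos).ne'

lemma sqrt_det_mul_integral_exp_neg_two_pi_quad (hA : A.PosDef) :
    √A.det * ∫ y, Real.exp (-(2 * π * quad A y)) = 1 := by
  have hdet := Real.sqrt_pos.2 hA.det_pos
  simp only [exp_neg_two_pi_quad_eq hA.posSemidef]
  rw [Matrix.integral_comp_mulVec (f := fun z => Real.exp (-π * (z ⬝ᵥ z))) (by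
    rw [hA.det_sqrt_eq]; exact hdet.ne'), integral_exp_neg_pi_dotProduct_self, hA.det_sqrt_eq,
    abs_of_pos hdet, mul_one, mul_inv_cancel₀ hdet.ne']

end Gaussian

lemma genErr_empty {n r : ℕ} {A : Matrix (Fin n) (Fin n) ℝ} (hA : A.PosDef)
    (M : Fin r → Fin n → ℝ) : genErr A M ∅ 0 = 1 := by
  simpa [genErr] using sqrt_det_mul_integral_exp_neg_two_pi_quad hA

lemma genErr_eq_integral_add {n r : ℕ} (A : Matrix (Fin n) (Fin n) ℝ) (M : Fin r → Fin n → ℝ)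
    (S : Finset (Fin r)) (x : Fin n → ℝ) :
    genErr A M S x = √A.det * ∫ y,
      (∏ j ∈ S, Real.sign (bilin A (M j) (y + x))) * Real.exp (-(2 * π * quad A y)) := by
  rw [genErr, ← integral_add_right_eq_self _ x]
  simp only [add_sub_cancel_right]

theorem tendsto_genErr_smul_atTop {n r : ℕ} {A : Matrix (Fin n) (Fin n) ℝ} (hA : A.PosDef)
    (M : Fin r → Fin n → ℝ) (x : Fin n → ℝ) :
    Tendsto (fun t : ℝ => genErr A M Finset.univ (t • x)) atTop
      (𝓝 (genErr A M (Finset.univ.filter (fun j => bilin A (M j) x = 0)) 0 *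
        ∏ j ∈ Finset.univ \ Finset.univ.filter (fun j => bilin A (M j) x = 0),
          Real.sign (bilin A (M j) x))) := by
  set S₀ := Finset.univ.filter (fun j => bilin A (M j) x = 0)
  set c := ∏ j ∈ Finset.univ \ S₀, Real.sign (bilin A (M j) x)
  set g := fun y : Fin n → ℝ => Real.exp (-(2 * π * quad A y))
  have hfreeze : ∀ y : Fin n → ℝ, ∀ᶠ t : ℝ in atTop, ∏ j, Real.sign (bilin A (M j) (y + t • x)) =
      (∏ j ∈ S₀, Real.sign (bilin A (M j) y)) * c := by
    intro y
    filter_upwards [eventually_all.2 fun j =>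
      Real.eventually_sign_add_mul_atTop (bilin A (M j) y) (bilin A (M j) x)] with t ht
    simp only [bilin_add_smul_right, ht, Finset.prod_ite, Finset.filter_not, S₀, c]
  have hdominated :
      Tendsto (fun t : ℝ => ∫ y, (∏ j, Real.sign (bilin A (M j) (y + t • x))) * g y) atTop
        (𝓝 (∫ y, ((∏ j ∈ S₀, Real.sign (bilin A (M j) y)) * c) * g y)) := by
    refine tendsto_integral_filter_of_dominated_convergence g
      (.of_forall fun t => ?_) (.of_forall fun t => .of_forall fun y => ?_)
      (integrable_exp_neg_two_pi_quad hA) (.of_forall fun y => ?_)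
    · refine (Measurable.aestronglyMeasurable ?_).mul
        (integrable_exp_neg_two_pi_quad hA).aestronglyMeasurable
      exact Finset.measurable_prod _ fun j _ => Real.measurable_sign.comp
        ((continuous_bilin A (M j)).measurable.comp (measurable_add_const _))
    · rw [norm_mul, Real.norm_of_nonneg (Real.exp_pos _).le, norm_prod]
      exact mul_le_of_le_one_left (Real.exp_pos _).le
        (Finset.prod_le_one (fun _ _ => norm_nonneg _) fun j _ => Real.abs_sign_le_one _)
    · exact tendsto_const_nhds.congr' <| (hfreeze y).mono fun t ht => by dsimp only; rw [ht]
  have hlimit : √A.det * ∫ y, ((∏ j ∈ S₀, Real.sign (bilin A (M j) y)) * c) * g y =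
      genErr A M S₀ 0 * c := by
    simp only [genErr, sub_zero, mul_right_comm _ c, integral_mul_const, g]
    ring
  simpa only [genErr_eq_integral_add, add_comm _ (_ • x), hlimit] using
    hdominated.const_mul √A.det

theorem statement0_general {n r : ℕ} (A : Matrix (Fin n) (Fin n) ℤ) (hA : (Rmat A).PosDef)
    (M : Fin r → Fin n → ℝ) (x : Fin n → ℝ) :
    Tendsto (fun t : ℝ => genErr (Rmat A) M Finset.univ (t • x)) atTop
      (nhds (∑ S ∈ (Finset.univ : Finset (Fin r)).powerset,
        genErr (Rmat A) M S 0 *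
          (if ∀ k ∈ S, bilin (Rmat A) (M k) x = 0 then 1 else 0) *
          ∏ j ∈ Finset.univ \ S, Real.sign (bilin (Rmat A) (M j) x))) ∧
    ((∀ j : Fin r, bilin (Rmat A) (M j) x ≠ 0) →
      Tendsto (fun t : ℝ => genErr (Rmat A) M Finset.univ (t • x)) atTop
        (nhds (∏ j : Fin r, Real.sign (bilin (Rmat A) (M j) x)))) := by
  have hlim := tendsto_genErr_smul_atTop hA M x
  refine ⟨?_, fun hne => ?_⟩
  · rwa [Finset.sum_powerset_mul_ite_forall_eq_zero_mul_prod_sign]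
  · have hS₀ : Finset.univ.filter (fun j => bilin (Rmat A) (M j) x = 0) = ∅ :=
      Finset.filter_false_of_mem fun j _ => hne j
    rwa [hS₀, genErr_empty hA, one_mul, Finset.sdiff_empty] at hlim

/-- the limit `lim_{t→∞} E_{Q,M}(t x)` equals the sum over subsets `S ⊆ [r]` of
`E_{Q,M_S}(0) · δ_{B(M_S,x)=0} · ∏_{j∉S} sgn(B(m_j,x))`; in particular, if all `B(m_j,x) ≠ 0`,
the limit is `∏_j sgn(B(m_j,x))`. -/
theorem statement0 {n r : ℕ} (A : Matrix (Fin n) (Fin n) ℤ) (hA : (Rmat A).PosDef)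
    (M : Fin r → Fin n → ℝ) (hM : LinearIndependent ℝ M) (x : Fin n → ℝ) :
    Tendsto (fun t : ℝ => genErr (Rmat A) M Finset.univ (t • x)) atTop
      (nhds (∑ S ∈ (Finset.univ : Finset (Fin r)).powerset,
        genErr (Rmat A) M S 0 *
          (if ∀ k ∈ S, bilin (Rmat A) (M k) x = 0 then 1 else 0) *
          ∏ j ∈ Finset.univ \ S, Real.sign (bilin (Rmat A) (M j) x))) ∧
    ((∀ j : Fin r, bilin (Rmat A) (M j) x ≠ 0) →
      Tendsto (fun t : ℝ => genErr (Rmat A) M Finset.univ (t • x)) atTop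
        (nhds (∏ j : Fin r, Real.sign (bilin (Rmat A) (M j) x)))) :=
  statement0_general A hA M x
end
end

section
/- For all m, r ∈ Λ = ℤⁿ, the function Ψ̃ satisfies the elliptic transformation Ψ̃_{Q,μ,ℓ,M}(z+mτ+r, 𝔷+mw+r; τ, w) = (−1)^{2Q(m+r)} q^{−Q(m)} e^{−2πiB(m,z)} Ψ̃_{Q,μ,ℓ,M}(z,𝔷;τ,w). -/
open MeasureTheory Filter
open scoped Real

attribute [local instance] Classical.propDecidable

noncomputable section

/-- The point space `(z, 𝔷, τ, w)`. -/
abbrev Xsp (n : ℕ) := (Fin n → ℂ) × (Fin n → ℂ) × ℂ × ℂ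

/-- The complexified bilinear form. -/
def bilinC {n : ℕ} (A : Matrix (Fin n) (Fin n) ℝ) (x y : Fin n → ℂ) : ℂ :=
  ∑ i, ∑ j, x i * (A i j : ℂ) * y j

/-- The complexified quadratic form. -/
def quadC {n : ℕ} (A : Matrix (Fin n) (Fin n) ℝ) (x : Fin n → ℂ) : ℂ := bilinC A x x / 2

/-- Complexification of a real vector. -/
def vC {n : ℕ} (x : Fin n → ℝ) : Fin n → ℂ := fun i => (x i : ℂ)

/-- The generalized error function at a complex argument, defined by the same convergent
Gaussian integral (agreeing with the analytic continuation from ℝⁿ). -/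
def genErrC {n r : ℕ} (A : Matrix (Fin n) (Fin n) ℝ) (M : Fin r → Fin n → ℝ)
    (S : Finset (Fin r)) (x : Fin n → ℂ) : ℂ :=
  (Real.sqrt A.det : ℂ) *
    ∫ y : Fin n → ℝ,
      (∏ j ∈ S, (Real.sign (bilin A (M j) y) : ℂ)) *
        Complex.exp (-(2 * (Real.pi : ℂ) * quadC A (vC y - x)))

/-- The lattice vector `n = ν + μ + ℓ/2` of the shifted lattice `Λ + μ + ℓ/2`. -/
def latVec {n : ℕ} (μ : Fin n → ℝ) (L : Fin n → ℤ) (ν : Fin n → ℤ) : Fin n → ℝ :=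
  fun i => (ν i : ℝ) + μ i + (L i : ℝ) / 2

/-- One term of the lattice sum defining the completed false theta function `Ψ̂`. -/
def psiTerm {n r : ℕ} (A : Matrix (Fin n) (Fin n) ℤ) (μ : Fin n → ℝ) (L : Fin n → ℤ)
    (M : Fin r → Fin n → ℝ) (ν : Fin n → ℤ) (p : Xsp n) : ℂ :=
  genErrC (Rmat A) M Finset.univ
      ((-Complex.I * (Complex.I * (p.2.2.2 - p.2.2.1)) ^ ((1:ℂ)/2)) •
        (vC (latVec μ L ν) + (p.2.2.2 - p.2.2.1)⁻¹ • (p.2.1 - p.1))) *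
    Complex.exp (2 * (Real.pi : ℂ) * Complex.I * p.2.2.1 *
      ((quad (Rmat A) (latVec μ L ν) : ℝ) : ℂ)) *
    Complex.exp (2 * (Real.pi : ℂ) * Complex.I *
      bilinC (Rmat A) (vC (latVec μ L ν)) (p.1 + vC fun i => (L i : ℝ) / 2))

/-- The completed false theta function `Ψ̂_{Q,μ,ℓ,M}(z,𝔷;τ,w)`. -/
def psiHat {n r : ℕ} (A : Matrix (Fin n) (Fin n) ℤ) (μ : Fin n → ℝ) (L : Fin n → ℤ)
    (M : Fin r → Fin n → ℝ) (p : Xsp n) : ℂ :=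
  ∑' ν : Fin n → ℤ, psiTerm A μ L M ν p

/-- The rescaled completion `Ψ̃ = (i(w−τ))^{r/2} Ψ̂`. -/
def psiTilde {n r : ℕ} (A : Matrix (Fin n) (Fin n) ℤ) (μ : Fin n → ℝ) (L : Fin n → ℤ)
    (M : Fin r → Fin n → ℝ) (p : Xsp n) : ℂ :=
  (Complex.I * (p.2.2.2 - p.2.2.1)) ^ ((r : ℂ) / 2) * psiHat A μ L M p

/-! The shift `z ↦ z + mτ + r`, `𝔷 ↦ 𝔷 + mw + r` leaves the argument of the error function
invariant once the summation index `ν` is replaced by `ν + m`, and by completing the square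
`Q(n) = Q(n + m) − Q(m) − B(n, m)` the Gaussian factor changes by `q^{−Q(m)} e^{−2πiB(m,z)}`
times `e^{2πi(B(n,r) − B(m,ℓ/2))}`. The characteristic-vector condition on `ℓ` and the
integrality of `B(μ, Λ)` show that this last exponent is `Q(m + r)` modulo `ℤ`, giving the sign
`(−1)^{2Q(m+r)}`; reindexing the lattice sum finishes the proof. -/

section Forms

variable {n : ℕ} (A : Matrix (Fin n) (Fin n) ℝ)

lemma bilin_add_left (x y u : Fin n → ℝ) : bilin A (x + y) u = bilin A x u + bilin A y u := by
  simp [bilin, add_mul, Finset.sum_add_distrib]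

lemma bilin_add_right (x u v : Fin n → ℝ) : bilin A x (u + v) = bilin A x u + bilin A x v := by
  simp [bilin, mul_add, Finset.sum_add_distrib]

lemma bilin_smul_left (c : ℝ) (x u : Fin n → ℝ) : bilin A (c • x) u = c * bilin A x u := by
  simp only [bilin, Pi.smul_apply, smul_eq_mul, Finset.mul_sum]
  exact Finset.sum_congr rfl fun i _ => Finset.sum_congr rfl fun j _ => by ring

lemma bilin_smul_right (c : ℝ) (x u : Fin n → ℝ) : bilin A x (c • u) = c * bilin A x u := by
  simp only [bilin, Pi.smul_apply, smul_eq_mul, Finset.mul_sum]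
  exact Finset.sum_congr rfl fun i _ => Finset.sum_congr rfl fun j _ => by ring

variable {A} in
lemma bilin_comm (hA : A.IsSymm) (x y : Fin n → ℝ) : bilin A x y = bilin A y x := by
  rw [bilin, Finset.sum_comm, bilin]
  exact Finset.sum_congr rfl fun i _ => Finset.sum_congr rfl fun j _ => by rw [hA.apply]; ring

variable {A} in
lemma quad_add (hA : A.IsSymm) (x y : Fin n → ℝ) :
    quad A (x + y) = quad A x + quad A y + bilin A x y := by
  simp only [quad, bilin_add_left, bilin_add_right, bilin_comm hA y x]
  ring

lemma bilinC_add_left (x y u : Fin n → ℂ) :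
    bilinC A (x + y) u = bilinC A x u + bilinC A y u := by
  simp [bilinC, add_mul, Finset.sum_add_distrib]

lemma bilinC_add_right (x u v : Fin n → ℂ) :
    bilinC A x (u + v) = bilinC A x u + bilinC A x v := by
  simp [bilinC, mul_add, Finset.sum_add_distrib]

lemma bilinC_smul_right (c : ℂ) (x u : Fin n → ℂ) : bilinC A x (c • u) = c * bilinC A x u := by
  simp only [bilinC, Pi.smul_apply, smul_eq_mul, Finset.mul_sum]
  exact Finset.sum_congr rfl fun i _ => Finset.sum_congr rfl fun j _ => by ring

lemma bilinC_vC (x y : Fin n → ℝ) : bilinC A (vC x) (vC y) = bilin A x y := by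
  simp [bilinC, bilin, vC]

lemma vC_add (x y : Fin n → ℝ) : vC (x + y) = vC x + vC y := by
  funext i; simp [vC]

end Forms

section Lattice

variable {n : ℕ} (A : Matrix (Fin n) (Fin n) ℤ)

lemma bilin_Rmat_intCast (a b : Fin n → ℤ) :
    bilin (Rmat A) (fun i => (a i : ℝ)) (fun i => (b i : ℝ)) =
      ((∑ i, ∑ j, a i * A i j * b j : ℤ) : ℝ) := by
  simp [bilin, Rmat]

lemma exp_two_pi_I_mul_quad_intCast (k : Fin n → ℤ) :
    Complex.exp (2 * Real.pi * Complex.I * quad (Rmat A) (fun i => (k i : ℝ))) =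
      (-1 : ℂ) ^ (∑ i, ∑ j, k i * A i j * k j) := by
  rw [quad, bilin_Rmat_intCast, ← Complex.exp_pi_mul_I, ← Complex.exp_int_mul]
  push_cast
  ring_nf

lemma latVec_add (μ : Fin n → ℝ) (L ν m : Fin n → ℤ) :
    latVec μ L (ν + m) = latVec μ L ν + fun i => (m i : ℝ) := by
  funext i; simp only [latVec, Pi.add_apply]; push_cast; ring

lemma exists_int_bilin_latVec_sub_eq_quad (hA : (Rmat A).IsSymm) {μ : Fin n → ℝ} {L : Fin n → ℤ}
    (hμ : ∀ k : Fin n → ℤ, ∃ z : ℤ, bilin (Rmat A) μ (fun i => (k i : ℝ)) = z)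
    (hL : ∀ k : Fin n → ℤ, ∃ z : ℤ,
      quad (Rmat A) (fun i => (k i : ℝ)) +
        bilin (Rmat A) (fun i => (L i : ℝ)) (fun i => (k i : ℝ)) / 2 = z)
    (ν m r : Fin n → ℤ) :
    ∃ j : ℤ, bilin (Rmat A) (latVec μ L ν) (fun i => (r i : ℝ)) -
        bilin (Rmat A) (fun i => (m i : ℝ)) (fun i => (L i : ℝ) / 2) =
      j + quad (Rmat A) (fun i => ((m + r) i : ℝ)) := by
  obtain ⟨a, ha⟩ := hμ r
  obtain ⟨b, hb⟩ := hL (m + r)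
  refine ⟨(∑ i, ∑ j, ν i * A i j * r j) + a + (∑ i, ∑ j, L i * A i j * r j) - b, ?_⟩
  have hlat : latVec μ L ν =
      (fun i => (ν i : ℝ)) + μ + (2⁻¹ : ℝ) • fun i => (L i : ℝ) := by
    funext i; simp only [latVec, Pi.add_apply, Pi.smul_apply, smul_eq_mul]; ring
  have hhalf : (fun i => (L i : ℝ) / 2) = (2⁻¹ : ℝ) • fun i => (L i : ℝ) := by
    funext i; simp only [Pi.smul_apply, smul_eq_mul]; ring
  have hmr : (fun i => ((m + r) i : ℝ)) = (fun i => (m i : ℝ)) + fun i => (r i : ℝ) := by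
    funext i; simp
  rw [hmr, bilin_add_right] at hb
  rw [hmr, hlat, hhalf, bilin_add_left, bilin_add_left, bilin_smul_left, bilin_smul_right,
    bilin_comm hA (fun i => (m i : ℝ)), ha]
  push_cast [bilin_Rmat_intCast] at hb ⊢
  linarith

end Lattice

section Shift

variable {n : ℕ}

lemma errArg_shift {τ w : ℂ} (hne : τ ≠ w) (x a b z zz : Fin n → ℂ) :
    x + (w - τ)⁻¹ • ((zz + w • a + b) - (z + τ • a + b)) = (x + a) + (w - τ)⁻¹ • (zz - z) := by
  have hwτ : w - τ ≠ 0 := sub_ne_zero.mpr hne.symm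
  funext i
  simp only [Pi.add_apply, Pi.smul_apply, Pi.sub_apply, smul_eq_mul]
  field_simp
  ring

lemma exponent_shift {A : Matrix (Fin n) (Fin n) ℝ} (hA : A.IsSymm) (x m r ℓ : Fin n → ℝ)
    (z : Fin n → ℂ) (τ : ℂ) :
    τ * quad A x + bilinC A (vC x) (z + τ • vC m + vC r + vC ℓ) =
      (bilin A x r - bilin A m ℓ : ℝ) + -(τ * quad A m) + -bilinC A (vC m) z +
        (τ * quad A (x + m) + bilinC A (vC (x + m)) (z + vC ℓ)) := by
  simp only [vC_add, quad_add hA, bilinC_add_left, bilinC_add_right, bilinC_smul_right,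
    bilinC_vC]
  push_cast
  ring

end Shift

section Elliptic

variable {n r : ℕ} (A : Matrix (Fin n) (Fin n) ℤ)

def ellipticFactor (m rr : Fin n → ℤ) (z : Fin n → ℂ) (τ : ℂ) : ℂ :=
  (-1 : ℂ) ^ (∑ i, ∑ j, (m i + rr i) * A i j * (m j + rr j)) *
    Complex.exp (-(2 * (Real.pi : ℂ) * Complex.I * τ *
      ((quad (Rmat A) (fun i => (m i : ℝ)) : ℝ) : ℂ))) *
    Complex.exp (-(2 * (Real.pi : ℂ) * Complex.I *
      bilinC (Rmat A) (vC (fun i => (m i : ℝ))) z))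

variable {A} (hA : (Rmat A).IsSymm) {μ : Fin n → ℝ} {L : Fin n → ℤ}
    (hμ : ∀ k : Fin n → ℤ, ∃ z : ℤ, bilin (Rmat A) μ (fun i => (k i : ℝ)) = z)
    (hL : ∀ k : Fin n → ℤ, ∃ z : ℤ,
      quad (Rmat A) (fun i => (k i : ℝ)) +
        bilin (Rmat A) (fun i => (L i : ℝ)) (fun i => (k i : ℝ)) / 2 = z)
    (M : Fin r → Fin n → ℝ) {τ w : ℂ} (hne : τ ≠ w) (z zz : Fin n → ℂ) (m rr : Fin n → ℤ)
include hA hμ hL hne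

lemma psiTerm_shift (ν : Fin n → ℤ) :
    psiTerm A μ L M ν
        (z + τ • vC (fun i => (m i : ℝ)) + vC (fun i => (rr i : ℝ)),
         zz + w • vC (fun i => (m i : ℝ)) + vC (fun i => (rr i : ℝ)), τ, w) =
      ellipticFactor A m rr z τ * psiTerm A μ L M (ν + m) (z, zz, τ, w) := by
  obtain ⟨j, hj⟩ := exists_int_bilin_latVec_sub_eq_quad A hA hμ hL ν m rr
  simp only [Pi.add_apply] at hj
  have hexp :
      Complex.exp (2 * Real.pi * Complex.I * τ * quad (Rmat A) (latVec μ L ν)) *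
          Complex.exp (2 * Real.pi * Complex.I * bilinC (Rmat A) (vC (latVec μ L ν))
            (z + τ • vC (fun i => (m i : ℝ)) + vC (fun i => (rr i : ℝ)) +
              vC fun i => (L i : ℝ) / 2)) =
        ellipticFactor A m rr z τ *
          (Complex.exp (2 * Real.pi * Complex.I * τ * quad (Rmat A) (latVec μ L (ν + m))) *
            Complex.exp (2 * Real.pi * Complex.I * bilinC (Rmat A) (vC (latVec μ L (ν + m)))
              (z + vC fun i => (L i : ℝ) / 2))) := by
    simp only [ellipticFactor, ← exp_two_pi_I_mul_quad_intCast, ← Complex.exp_add]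
    refine Complex.exp_eq_exp_iff_exists_int.mpr ⟨j, ?_⟩
    rw [latVec_add]
    linear_combination (norm := (push_cast; ring)) (2 * Real.pi * Complex.I) *
      (exponent_shift hA (latVec μ L ν) (fun i => (m i : ℝ)) (fun i => (rr i : ℝ))
        (fun i => (L i : ℝ) / 2) z τ + congrArg (fun t : ℝ => (t : ℂ)) hj)
  simp only [psiTerm]
  rw [errArg_shift hne, ← vC_add, ← latVec_add, mul_assoc, hexp]
  ring

lemma psiHat_shift :
    psiHat A μ L M
        (z + τ • vC (fun i => (m i : ℝ)) + vC (fun i => (rr i : ℝ)),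
         zz + w • vC (fun i => (m i : ℝ)) + vC (fun i => (rr i : ℝ)), τ, w) =
      ellipticFactor A m rr z τ * psiHat A μ L M (z, zz, τ, w) := by
  -- No summability is needed: over a field, `tsum` commutes with constant factors and with
  -- reindexing by a bijection even for non-summable families.
  rw [psiHat, tsum_congr (psiTerm_shift hA hμ hL M hne z zz m rr), tsum_mul_left, psiHat]
  exact congrArg _ ((Equiv.addRight m).tsum_eq fun ν => psiTerm A μ L M ν (z, zz, τ, w))

end Elliptic

theorem statement6_general {n r : ℕ} (A : Matrix (Fin n) (Fin n) ℤ) (hA : (Rmat A).PosDef)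
    (μ : Fin n → ℝ) (L : Fin n → ℤ)
    (hμ : ∀ k : Fin n → ℤ, ∃ z : ℤ, bilin (Rmat A) μ (fun i => (k i : ℝ)) = z)
    (hL : ∀ k : Fin n → ℤ, ∃ z : ℤ,
      quad (Rmat A) (fun i => (k i : ℝ)) +
        bilin (Rmat A) (fun i => (L i : ℝ)) (fun i => (k i : ℝ)) / 2 = z)
    (M : Fin r → Fin n → ℝ)
    (z zz : Fin n → ℂ) (τ w : ℂ) (hne : τ ≠ w)
    (m rr : Fin n → ℤ) :
    psiTilde A μ L M
        (z + τ • vC (fun i => (m i : ℝ)) + vC (fun i => (rr i : ℝ)),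
         zz + w • vC (fun i => (m i : ℝ)) + vC (fun i => (rr i : ℝ)), τ, w) =
      (-1 : ℂ) ^ (∑ i, ∑ j, (m i + rr i) * A i j * (m j + rr j)) *
        Complex.exp (-(2 * (Real.pi : ℂ) * Complex.I * τ *
          ((quad (Rmat A) (fun i => (m i : ℝ)) : ℝ) : ℂ))) *
        Complex.exp (-(2 * (Real.pi : ℂ) * Complex.I *
          bilinC (Rmat A) (vC (fun i => (m i : ℝ))) z)) *
        psiTilde A μ L M (z, zz, τ, w) := by
  have hsymm : (Rmat A).IsSymm := Matrix.isHermitian_iff_isSymm.mp hA.1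
  rw [psiTilde, psiTilde, psiHat_shift hsymm hμ hL M hne z zz m rr, ellipticFactor]
  ring

/-- the elliptic transformation
`Ψ̃_μ(z+mτ+r, 𝔷+mw+r; τ,w) = (−1)^{2Q(m+r)} q^{−Q(m)} e^{−2πiB(m,z)} Ψ̃_μ(z,𝔷;τ,w)`
for lattice vectors `m, r ∈ Λ = ℤⁿ`. -/
theorem statement6 {n r : ℕ} (A : Matrix (Fin n) (Fin n) ℤ) (hA : (Rmat A).PosDef)
    (μ : Fin n → ℝ) (L : Fin n → ℤ)
    (hμ : ∀ k : Fin n → ℤ, ∃ z : ℤ, bilin (Rmat A) μ (fun i => (k i : ℝ)) = z)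
    (hL : ∀ k : Fin n → ℤ, ∃ z : ℤ,
      quad (Rmat A) (fun i => (k i : ℝ)) +
        bilin (Rmat A) (fun i => (L i : ℝ)) (fun i => (k i : ℝ)) / 2 = z)
    (M : Fin r → Fin n → ℝ) (hM : LinearIndependent ℝ M)
    (z zz : Fin n → ℂ) (τ w : ℂ) (hτ : 0 < τ.im) (hw : 0 < w.im) (hne : τ ≠ w)
    (m rr : Fin n → ℤ) :
    psiTilde A μ L M
        (z + τ • vC (fun i => (m i : ℝ)) + vC (fun i => (rr i : ℝ)),
         zz + w • vC (fun i => (m i : ℝ)) + vC (fun i => (rr i : ℝ)), τ, w) =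
      (-1 : ℂ) ^ (∑ i, ∑ j, (m i + rr i) * A i j * (m j + rr j)) *
        Complex.exp (-(2 * (Real.pi : ℂ) * Complex.I * τ *
          ((quad (Rmat A) (fun i => (m i : ℝ)) : ℝ) : ℂ))) *
        Complex.exp (-(2 * (Real.pi : ℂ) * Complex.I *
          bilinC (Rmat A) (vC (fun i => (m i : ℝ))) z)) *
        psiTilde A μ L M (z, zz, τ, w) :=
  statement6_general A hA μ L hμ hL M z zz τ w hne m rr
end
end
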